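/- Let B and D be m×n real matrices with m ≤ n, and let D = Σ_{i=1}^m σ_i x_i y_iᵀ be a singular value decomposition of D with σ_1 ≥ … ≥ σ_m. Fix δ > 0 and define B̂ = Σ_{i : σ_i > (1+δ)‖D − B‖} σ_i x_i y_iᵀ, where ‖·‖ is the operator (spectral) norm. Then ‖B̂ − B‖_F ≤ K(δ)·(‖D − B‖·‖B‖_*)^{1/2}, where K(δ) = (4 + 2δ)√(2/δ) + √(2 + δ). -/

import Mathlib

open MeasureTheory ProbabilityTheory Filter Matrix

noncomputable section

/-- Singular values of a real `m × n` matrix, in decreasing order (`0`-indexed):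
`svalsDesc A 0 ≥ svalsDesc A 1 ≥ …` (the square roots of the eigenvalues of `A Aᵀ`). -/
def svalsDesc {m n : ℕ} (A : Matrix (Fin m) (Fin n) ℝ) : Fin m → ℝ := fun i =>
  let hA : (A * Aᴴ).IsHermitian := Matrix.isHermitian_mul_conjTranspose_self A
  Real.sqrt (hA.eigenvalues (Tuple.sort hA.eigenvalues i.rev))

/-- `sval A k` is the `k`-th largest singular value `λ_k(A)` (`1`-indexed), with junk
value `0` if `k` is out of range. -/
def sval {m n : ℕ} (A : Matrix (Fin m) (Fin n) ℝ) (k : ℕ) : ℝ :=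
  if h : k - 1 < m then svalsDesc A ⟨k - 1, h⟩ else 0

/-- Nuclear norm `‖A‖_* = Σ_i λ_i(A)`. -/
def nuclearNorm {m n : ℕ} (A : Matrix (Fin m) (Fin n) ℝ) : ℝ :=
  ∑ i : Fin m, svalsDesc A i

/-- Squared Frobenius norm `‖A‖_F² = Σ_{ij} A_{ij}²`. -/
def frobSq {m n : ℕ} (A : Matrix (Fin m) (Fin n) ℝ) : ℝ :=
  ∑ i : Fin m, ∑ j : Fin n, (A i j) ^ 2

/-- Operator (spectral) norm: the largest singular value. -/
def opNorm {m n : ℕ} (A : Matrix (Fin m) (Fin n) ℝ) : ℝ := sval A 1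

/-- Density of the Marčenko–Pastur distribution with parameter `γ`:
`(1/(2πγx))·√((γ₊ − x)(x − γ₋))` on `[γ₋, γ₊]`, where `γ± = (1 ± √γ)²`. -/
def mpDensity (γ : ℝ) (x : ℝ) : ℝ :=
  if (1 - Real.sqrt γ) ^ 2 ≤ x ∧ x ≤ (1 + Real.sqrt γ) ^ 2 then
    Real.sqrt (((1 + Real.sqrt γ) ^ 2 - x) * (x - (1 - Real.sqrt γ) ^ 2)) / (2 * Real.pi * γ * x)
  else 0

/-- CDF `F_γ` of the Marčenko–Pastur distribution with parameter `γ`. -/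
def mpCDF (γ : ℝ) (x : ℝ) : ℝ := ∫ t in Set.Iic x, mpDensity γ t

/-- Quantile function `F⁻¹(p) = inf {x | F x ≥ p}`. -/
def quantileOf (F : ℝ → ℝ) (p : ℝ) : ℝ := sInf {x | p ≤ F x}

/-- Quantile function of the Marčenko–Pastur distribution. -/
def mpQuantile (γ : ℝ) (p : ℝ) : ℝ := quantileOf (mpCDF γ) p

/-- `μ_γ = F_γ⁻¹(1/2)`, the median of the Marčenko–Pastur distribution. -/
def mpMedian (γ : ℝ) : ℝ := mpQuantile γ (1 / 2)

/-- A law on `ℝ` is sub-Gaussian if its moment generating function satisfies a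
sub-Gaussian bound. -/
def IsSubGaussianLaw (ν : Measure ℝ) : Prop :=
  ∃ c > 0, ∀ t : ℝ, ∫ x, Real.exp (t * x) ∂ν ≤ Real.exp (c * t ^ 2)

/-- The entries of the random matrix `A` are i.i.d. with common law `ν`. -/
def IIDEntries {Ω : Type*} [MeasurableSpace Ω] (μ : Measure Ω) {m n : ℕ}
    (A : Ω → Matrix (Fin m) (Fin n) ℝ) (ν : Measure ℝ) : Prop :=
  (∀ i j, Measurable fun ω => A ω i j) ∧
  (∀ i j, Measure.map (fun ω => A ω i j) μ = ν) ∧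
  iIndepFun (m := fun _ : Fin m × Fin n => Real.measurableSpace) (fun p ω => A ω p.1 p.2) μ

/-- The Gavish–Donoho estimator `σ̂ = λ_{m/2}(X) / √(n μ_γ)` (the median singular value,
`m` even, normalized by `√(n μ_γ)`). -/
def sigmaHat {m n : ℕ} (γ : ℝ) (X : Matrix (Fin m) (Fin n) ℝ) : ℝ :=
  sval X (m / 2) / Real.sqrt (n * mpMedian γ)

/-- `u`, `v` together with the singular values of `X` form a singular value
decomposition `X = Σ_i λ_i(X) uᵢ vᵢᵀ` of `X` (with `uᵢ`, `vᵢ` orthonormal families). -/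
def IsSVD {m n : ℕ} (X : Matrix (Fin m) (Fin n) ℝ)
    (u : Fin m → Fin m → ℝ) (v : Fin m → Fin n → ℝ) : Prop :=
  (∀ i j, ∑ k, u i k * u j k = if i = j then 1 else 0) ∧
  (∀ i j, ∑ k, v i k * v j k = if i = j then 1 else 0) ∧
  X = ∑ i : Fin m, svalsDesc X i • Matrix.vecMulVec (u i) (v i)

/-- Singular value thresholding: keep the part of the SVD `X = Σ_i λ_i(X) uᵢ vᵢᵀ`
with singular values `≥ τ`.  With `τ = (2+η) σ̂ √n` this is the modified USVT
estimator `M̂`. -/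
def usvtFrom {m n : ℕ} (X : Matrix (Fin m) (Fin n) ℝ)
    (u : Fin m → Fin m → ℝ) (v : Fin m → Fin n → ℝ) (τ : ℝ) : Matrix (Fin m) (Fin n) ℝ :=
  ∑ i ∈ Finset.univ.filter (fun i => τ ≤ svalsDesc X i),
    svalsDesc X i • Matrix.vecMulVec (u i) (v i)

/-!
Write `ε = ‖D - B‖` and `B̂ - B = ∑ₗ ρₗ pₗ qₗᵀ`. Since `D - B̂` keeps only singular values
`≤ (1 + δ) ε`, every `ρₗ ≤ (2 + δ) ε`, and by trace duality `∑ₗ ρₗ ≤ ‖B̂‖_* + ‖B‖_*`. Testing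
`B = D - (D - B)` against the kept pairs `(xᵢ, yᵢ)` gives `∑_{kept} (σᵢ - ε) ≤ ‖B‖_*`; as each kept
`σᵢ - ε` exceeds `δ ε`, this bounds `ε ‖B̂‖_* ≤ (1 + 1/δ) ε ‖B‖_*`. Hence
`‖B̂ - B‖_F² = ∑ₗ ρₗ² ≤ (2 + δ) ε ∑ₗ ρₗ ≤ (2 + δ)(2 + 1/δ) ε ‖B‖_* ≤ K(δ)² ε ‖B‖_*`.
-/

open Finset

def Suborthonormal {ι κ : Type*} [Fintype κ] (v : ι → κ → ℝ) : Prop :=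
  Pairwise (fun i j => v i ⬝ᵥ v j = 0) ∧ ∀ i, v i ⬝ᵥ v i ≤ 1

section Suborthonormal

variable {ι κ : Type*} [Fintype κ]

theorem Suborthonormal.of_dotProduct_eq_ite [DecidableEq ι] {v : ι → κ → ℝ}
    (hv : ∀ i j, v i ⬝ᵥ v j = if i = j then 1 else 0) : Suborthonormal v :=
  ⟨fun i j hij => show v i ⬝ᵥ v j = 0 by rw [hv, if_neg hij], fun i => by rw [hv, if_pos rfl]⟩

theorem sq_dotProduct_le (u w : κ → ℝ) : (u ⬝ᵥ w) ^ 2 ≤ (u ⬝ᵥ u) * (w ⬝ᵥ w) := by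
  simpa only [dotProduct, sq] using Finset.sum_mul_sq_le_sq_mul_sq univ u w

theorem Suborthonormal.sum_sq_dotProduct_le {v : ι → κ → ℝ} (hv : Suborthonormal v)
    (s : Finset ι) (w : κ → ℝ) : ∑ i ∈ s, (w ⬝ᵥ v i) ^ 2 ≤ w ⬝ᵥ w := by
  set T := ∑ i ∈ s, (w ⬝ᵥ v i) ^ 2
  set P := ∑ i ∈ s, (w ⬝ᵥ v i) • v i
  have hwP : w ⬝ᵥ P = T := by
    simp only [P, T, dotProduct_sum, dotProduct_smul, smul_eq_mul, sq]
  have hPP : P ⬝ᵥ P ≤ T := by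
    have : P ⬝ᵥ P = ∑ i ∈ s, (w ⬝ᵥ v i) ^ 2 * (v i ⬝ᵥ v i) := by
      simp only [P, sum_dotProduct, dotProduct_sum, smul_dotProduct, dotProduct_smul, smul_eq_mul]
      refine sum_congr rfl fun i hi => ?_
      rw [sum_eq_single i (fun j _ hji => by rw [hv.1 hji]; ring) (fun h => absurd hi h)]
      ring
    rw [this]
    exact sum_le_sum fun i _ => mul_le_of_le_one_right (sq_nonneg _) (hv.2 i)
  have hT : 0 ≤ T := sum_nonneg fun i _ => sq_nonneg _
  have hw : 0 ≤ w ⬝ᵥ w := sum_nonneg fun i _ => mul_self_nonneg (w i)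
  nlinarith [sq_dotProduct_le w P]

theorem Suborthonormal.sum_abs_mul_le_one {κ' : Type*} [Fintype κ'] {P : ι → κ → ℝ}
    {Q : ι → κ' → ℝ} (hP : Suborthonormal P) (hQ : Suborthonormal Q) (s : Finset ι)
    {u : κ → ℝ} {w : κ' → ℝ} (hu : u ⬝ᵥ u ≤ 1) (hw : w ⬝ᵥ w ≤ 1) :
    ∑ i ∈ s, |u ⬝ᵥ P i| * |w ⬝ᵥ Q i| ≤ 1 := by
  have hP' := (hP.sum_sq_dotProduct_le s u).trans hu
  have hQ' := (hQ.sum_sq_dotProduct_le s w).trans hw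
  have hCS := sum_mul_sq_le_sq_mul_sq s (fun i => |u ⬝ᵥ P i|) (fun i => |w ⬝ᵥ Q i|)
  simp only [sq_abs] at hCS
  have h0 : 0 ≤ ∑ i ∈ s, |u ⬝ᵥ P i| * |w ⬝ᵥ Q i| := by positivity
  nlinarith [sum_nonneg fun i (_ : i ∈ s) => sq_nonneg (u ⬝ᵥ P i)]

end Suborthonormal

section Expansion

variable {ι m n : Type*} [Fintype m] [Fintype n]

theorem dotProduct_sum_smul_vecMulVec_mulVec (t : Finset ι) (c : ι → ℝ) (a : ι → m → ℝ)
    (b : ι → n → ℝ) (u : m → ℝ) (w : n → ℝ) :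
    u ⬝ᵥ ((∑ j ∈ t, c j • vecMulVec (a j) (b j)) *ᵥ w) =
      ∑ j ∈ t, c j * ((u ⬝ᵥ a j) * (b j ⬝ᵥ w)) := by
  simp only [sum_mulVec, smul_mulVec, vecMulVec_mulVec, dotProduct_sum, dotProduct_smul,
    smul_eq_mul]
  exact sum_congr rfl fun j _ => by rw [op_smul_eq_mul]

variable {t : Finset ι} {c : ι → ℝ} {a : ι → m → ℝ} {b : ι → n → ℝ}

theorem abs_dotProduct_sum_smul_vecMulVec_mulVec_le (ha : Suborthonormal a)
    (hb : Suborthonormal b) {C : ℝ} (hC : 0 ≤ C) (hc : ∀ j ∈ t, |c j| ≤ C) {u : m → ℝ}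
    {w : n → ℝ} (hu : u ⬝ᵥ u ≤ 1) (hw : w ⬝ᵥ w ≤ 1) :
    |u ⬝ᵥ ((∑ j ∈ t, c j • vecMulVec (a j) (b j)) *ᵥ w)| ≤ C := by
  rw [dotProduct_sum_smul_vecMulVec_mulVec]
  calc |∑ j ∈ t, c j * ((u ⬝ᵥ a j) * (b j ⬝ᵥ w))|
      ≤ ∑ j ∈ t, C * (|u ⬝ᵥ a j| * |w ⬝ᵥ b j|) := by
        refine (abs_sum_le_sum_abs _ _).trans (sum_le_sum fun j hj => ?_)
        rw [abs_mul, abs_mul, dotProduct_comm (b j)]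
        exact mul_le_mul_of_nonneg_right (hc j hj) (by positivity)
    _ ≤ C * 1 := by
        rw [← mul_sum]
        exact mul_le_mul_of_nonneg_left (ha.sum_abs_mul_le_one hb t hu hw) hC
    _ = C := mul_one C

theorem abs_sum_dotProduct_sum_smul_vecMulVec_mulVec_le (ha : Suborthonormal a)
    (hb : Suborthonormal b) {ι' : Type*} {p : ι' → m → ℝ} {q : ι' → n → ℝ}
    (hp : Suborthonormal p) (hq : Suborthonormal q) (s : Finset ι') :
    |∑ l ∈ s, p l ⬝ᵥ ((∑ j ∈ t, c j • vecMulVec (a j) (b j)) *ᵥ q l)| ≤ ∑ j ∈ t, |c j| := by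
  simp_rw [dotProduct_sum_smul_vecMulVec_mulVec]
  rw [sum_comm]
  refine (abs_sum_le_sum_abs _ _).trans (sum_le_sum fun j _ => ?_)
  rw [← mul_sum, abs_mul]
  refine mul_le_of_le_one_right (abs_nonneg _) ?_
  calc |∑ l ∈ s, (p l ⬝ᵥ a j) * (b j ⬝ᵥ q l)|
      ≤ ∑ l ∈ s, |a j ⬝ᵥ p l| * |b j ⬝ᵥ q l| := by
        refine (abs_sum_le_sum_abs _ _).trans_eq (sum_congr rfl fun l _ => ?_)
        rw [abs_mul, dotProduct_comm (p l)]
    _ ≤ 1 := hp.sum_abs_mul_le_one hq s (ha.2 j) (hb.2 j)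

end Expansion

/-- Unit length is only required where `s j ≠ 0`: from the eigenvectors `u j` of `A Aᵀ` one gets
`v j = (s j)⁻¹ • Aᵀ u j`, which vanishes when `s j = 0`. -/
structure IsSingularExpansion {ι m n : Type*} [Fintype ι] [Fintype m] [Fintype n]
    (A : Matrix m n ℝ) (s : ι → ℝ) (u : ι → m → ℝ) (v : ι → n → ℝ) : Prop where
  eq_sum : A = ∑ j, s j • vecMulVec (u j) (v j)
  nonneg : ∀ j, 0 ≤ s j
  left : Suborthonormal u
  right : Suborthonormal v
  unit : ∀ j, s j ≠ 0 → u j ⬝ᵥ u j = 1 ∧ v j ⬝ᵥ v j = 1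

namespace IsSingularExpansion

variable {ι m n : Type*} [Fintype ι] [Fintype m] [Fintype n] {A : Matrix m n ℝ} {s : ι → ℝ}
  {u : ι → m → ℝ} {v : ι → n → ℝ}

theorem dotProduct_mulVec_self (h : IsSingularExpansion A s u v) (l : ι) :
    u l ⬝ᵥ (A *ᵥ v l) = s l := by
  rw [h.eq_sum, dotProduct_sum_smul_vecMulVec_mulVec,
    sum_eq_single l (fun j _ hjl => by rw [h.left.1 hjl.symm]; ring) (by simp)]
  by_cases hl : s l = 0
  · simp [hl]
  · rw [(h.unit l hl).1, (h.unit l hl).2, mul_one, mul_one]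

theorem frobSq_eq {m n : ℕ} {A : Matrix (Fin m) (Fin n) ℝ} {u : ι → Fin m → ℝ}
    {v : ι → Fin n → ℝ} (h : IsSingularExpansion A s u v) : frobSq A = ∑ j, s j ^ 2 := by
  have hpair : ∑ i, ∑ k, A i k * (∑ j, s j • vecMulVec (u j) (v j)) i k =
      ∑ j, s j * (u j ⬝ᵥ (A *ᵥ v j)) := by
    simp only [Matrix.sum_apply, Matrix.smul_apply, vecMulVec_apply, smul_eq_mul, dotProduct,
      mulVec, mul_sum]
    calc _ = ∑ i, ∑ j, ∑ k, s j * (u j i * (A i k * v j k)) :=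
          sum_congr rfl fun i _ => by
            rw [sum_comm]; exact sum_congr rfl fun _ _ => sum_congr rfl fun _ _ => by ring
      _ = _ := sum_comm
  rw [← h.eq_sum] at hpair
  simp only [frobSq, sq, hpair, h.dotProduct_mulVec_self]

end IsSingularExpansion

theorem Matrix.IsHermitian.eigenvectorBasis_dotProduct {m : Type*} [Fintype m] [DecidableEq m]
    {H : Matrix m m ℝ} (hH : H.IsHermitian) (i j : m) :
    ⇑(hH.eigenvectorBasis i) ⬝ᵥ ⇑(hH.eigenvectorBasis j) = if i = j then 1 else 0 := by
  have := (orthonormal_iff_ite.1 hH.eigenvectorBasis.orthonormal) j i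
  rw [EuclideanSpace.inner_eq_star_dotProduct] at this
  simpa [eq_comm] using this

theorem Matrix.IsHermitian.sum_vecMulVec_eigenvectorBasis {m : Type*} [Fintype m]
    [DecidableEq m] {H : Matrix m m ℝ} (hH : H.IsHermitian) :
    ∑ j, vecMulVec ⇑(hH.eigenvectorBasis j) ⇑(hH.eigenvectorBasis j) = 1 := by
  ext i k
  rw [← Unitary.coe_mul_star_self hH.eigenvectorUnitary, Matrix.sum_apply, mul_apply]
  simp [vecMulVec_apply]

section SingularValues

variable {m n : ℕ} {A : Matrix (Fin m) (Fin n) ℝ}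

theorem opNorm_nonneg (A : Matrix (Fin m) (Fin n) ℝ) : 0 ≤ opNorm A := by
  unfold opNorm sval
  split_ifs
  exacts [Real.sqrt_nonneg _, le_rfl]

theorem nuclearNorm_nonneg (A : Matrix (Fin m) (Fin n) ℝ) : 0 ≤ nuclearNorm A :=
  sum_nonneg fun _ _ => Real.sqrt_nonneg _

theorem sum_sqrt_eigenvalues_eq_nuclearNorm (hH : (A * Aᴴ).IsHermitian) :
    ∑ j, √(hH.eigenvalues j) = nuclearNorm A :=
  (Equiv.sum_comp (Fin.revPerm.trans (Tuple.sort hH.eigenvalues))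
    fun j => √(hH.eigenvalues j)).symm

theorem sqrt_eigenvalues_le_opNorm (hH : (A * Aᴴ).IsHermitian) (j : Fin m) :
    √(hH.eigenvalues j) ≤ opNorm A := by
  have hm : 0 < m := j.pos
  set τ := Tuple.sort hH.eigenvalues
  have hop : opNorm A = √(hH.eigenvalues (τ (⟨0, hm⟩ : Fin m).rev)) := by
    rw [opNorm, sval, dif_pos (by omega : 1 - 1 < m)]
    rfl
  rw [hop, ← τ.apply_symm_apply j]
  refine Real.sqrt_le_sqrt (Tuple.monotone_sort hH.eigenvalues (Fin.le_def.2 ?_))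
  simp only [Fin.val_rev]
  omega

theorem vecMul_eigenvectorBasis_dotProduct (hH : (A * Aᴴ).IsHermitian) (i j : Fin m) :
    (⇑(hH.eigenvectorBasis i) ᵥ* A) ⬝ᵥ (⇑(hH.eigenvectorBasis j) ᵥ* A) =
      if i = j then hH.eigenvalues j else 0 := by
  rw [← dotProduct_mulVec, ← mulVec_transpose, mulVec_mulVec,
    ← conjTranspose_eq_transpose_of_trivial, hH.mulVec_eigenvectorBasis j, dotProduct_smul,
    hH.eigenvectorBasis_dotProduct, smul_eq_mul, mul_ite, mul_one, mul_zero]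

theorem exists_isSingularExpansion (A : Matrix (Fin m) (Fin n) ℝ) :
    ∃ (s : Fin m → ℝ) (u : Fin m → Fin m → ℝ) (v : Fin m → Fin n → ℝ),
      IsSingularExpansion A s u v ∧ (∀ j, s j ≤ opNorm A) ∧ ∑ j, s j = nuclearNorm A := by
  have hH := isHermitian_mul_conjTranspose_self A
  set u : Fin m → Fin m → ℝ := fun j => ⇑(hH.eigenvectorBasis j)
  set s : Fin m → ℝ := fun j => √(hH.eigenvalues j)
  have hu : ∀ i j, u i ⬝ᵥ u j = if i = j then 1 else 0 := hH.eigenvectorBasis_dotProduct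
  have hw : ∀ i j, (u i ᵥ* A) ⬝ᵥ (u j ᵥ* A) = if i = j then hH.eigenvalues j else 0 :=
    vecMul_eigenvectorBasis_dotProduct hH
  have hs : ∀ j, s j ^ 2 = hH.eigenvalues j := fun j =>
    Real.sq_sqrt ((posSemidef_self_mul_conjTranspose A).eigenvalues_nonneg j)
  have hsw : ∀ j, s j • (s j)⁻¹ • (u j ᵥ* A) = u j ᵥ* A := fun j => by
    by_cases hj : s j = 0
    · have : (u j ᵥ* A) ⬝ᵥ (u j ᵥ* A) = 0 := by rw [hw, if_pos rfl, ← hs, hj]; ring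
      rw [dotProduct_self_eq_zero.1 this, smul_zero, smul_zero]
    · exact smul_inv_smul₀ hj _
  set v : Fin m → Fin n → ℝ := fun j => (s j)⁻¹ • (u j ᵥ* A)
  have hv : ∀ i j, v i ⬝ᵥ v j = (s i)⁻¹ * (s j)⁻¹ * if i = j then s j ^ 2 else 0 := fun i j => by
    simp only [v, smul_dotProduct, dotProduct_smul, hw, ← hs, smul_eq_mul]
    ring
  have hvv : ∀ j, s j ≠ 0 → v j ⬝ᵥ v j = 1 := fun j hj => by
    rw [hv, if_pos rfl]; field_simp
  refine ⟨s, u, v, ⟨?_, fun j => Real.sqrt_nonneg _, Suborthonormal.of_dotProduct_eq_ite hu,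
    ⟨fun i j hij => ?_, fun j => ?_⟩, fun j hj => ⟨(hu j j).trans (if_pos rfl), hvv j hj⟩⟩,
    sqrt_eigenvalues_le_opNorm hH, sum_sqrt_eigenvalues_eq_nuclearNorm hH⟩
  · simp only [v, ← vecMulVec_smul, hsw, ← vecMulVec_mul]
    rw [← Matrix.sum_mul, hH.sum_vecMulVec_eigenvectorBasis, Matrix.one_mul]
  · simp only [hv, if_neg hij, mul_zero]
  · by_cases hj : s j = 0
    · simp [hv, hj]
    · exact (hvv j hj).le

end SingularValues

section NormBounds

variable {m n : ℕ}

theorem abs_dotProduct_mulVec_le_opNorm (A : Matrix (Fin m) (Fin n) ℝ) {u : Fin m → ℝ}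
    {w : Fin n → ℝ} (hu : u ⬝ᵥ u ≤ 1) (hw : w ⬝ᵥ w ≤ 1) : |u ⬝ᵥ (A *ᵥ w)| ≤ opNorm A := by
  obtain ⟨s, a, b, h, hs, -⟩ := exists_isSingularExpansion A
  conv_lhs => rw [h.eq_sum]
  exact abs_dotProduct_sum_smul_vecMulVec_mulVec_le h.left h.right (opNorm_nonneg A)
    (fun j _ => (abs_of_nonneg (h.nonneg j)).trans_le (hs j)) hu hw

theorem abs_sum_dotProduct_mulVec_le_nuclearNorm (A : Matrix (Fin m) (Fin n) ℝ) {ι : Type*}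
    {p : ι → Fin m → ℝ} {q : ι → Fin n → ℝ} (hp : Suborthonormal p) (hq : Suborthonormal q)
    (s : Finset ι) : |∑ l ∈ s, p l ⬝ᵥ (A *ᵥ q l)| ≤ nuclearNorm A := by
  obtain ⟨σ, a, b, h, -, hsum⟩ := exists_isSingularExpansion A
  conv_lhs => rw [h.eq_sum]
  calc _ ≤ ∑ j, |σ j| := abs_sum_dotProduct_sum_smul_vecMulVec_mulVec_le h.left h.right hp hq s
    _ = nuclearNorm A := by simp_rw [abs_of_nonneg (h.nonneg _)]; exact hsum

end NormBounds

section Thresholding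

variable {m n : ℕ} {B D : Matrix (Fin m) (Fin n) ℝ} {σ : Fin m → ℝ} {x : Fin m → Fin m → ℝ}
  {y : Fin m → Fin n → ℝ}

theorem dotProduct_threshold_sub_mulVec_le (hD : IsSingularExpansion D σ x y)
    (S : Finset (Fin m)) {c : ℝ} (hc0 : 0 ≤ c) (hc : ∀ i ∉ S, σ i ≤ c) {u : Fin m → ℝ}
    {w : Fin n → ℝ} (hu : u ⬝ᵥ u ≤ 1) (hw : w ⬝ᵥ w ≤ 1) :
    u ⬝ᵥ ((∑ i ∈ S, σ i • vecMulVec (x i) (y i) - B) *ᵥ w) ≤ c + opNorm (D - B) := by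
  have hsplit : ∑ i ∈ S, σ i • vecMulVec (x i) (y i) - B =
      (D - B) - ∑ i ∈ Sᶜ, σ i • vecMulVec (x i) (y i) := by
    rw [hD.eq_sum, ← sum_compl_add_sum S]
    abel
  have hrest := abs_dotProduct_sum_smul_vecMulVec_mulVec_le hD.left hD.right hc0
    (fun i hi => (abs_of_nonneg (hD.nonneg i)).trans_le (hc i (mem_compl.1 hi))) hu hw
  have hE := abs_dotProduct_mulVec_le_opNorm (D - B) hu hw
  rw [hsplit, sub_mulVec, dotProduct_sub]
  linarith [le_abs_self (u ⬝ᵥ ((D - B) *ᵥ w)),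
    neg_abs_le (u ⬝ᵥ ((∑ i ∈ Sᶜ, σ i • vecMulVec (x i) (y i)) *ᵥ w))]

theorem singularValue_threshold_sub_le (hD : IsSingularExpansion D σ x y)
    {S : Finset (Fin m)} {ρ : Fin m → ℝ} {p : Fin m → Fin m → ℝ} {q : Fin m → Fin n → ℝ}
    (hM : IsSingularExpansion (∑ i ∈ S, σ i • vecMulVec (x i) (y i) - B) ρ p q) {c : ℝ}
    (hc0 : 0 ≤ c) (hc : ∀ i ∉ S, σ i ≤ c) (l : Fin m) : ρ l ≤ c + opNorm (D - B) := by
  by_cases hl : ρ l = 0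
  · rw [hl]
    exact add_nonneg hc0 (opNorm_nonneg _)
  rw [← hM.dotProduct_mulVec_self l]
  exact dotProduct_threshold_sub_mulVec_le hD S hc0 hc (hM.unit l hl).1.le (hM.unit l hl).2.le

theorem sum_singularValues_threshold_sub_le (hD : IsSingularExpansion D σ x y)
    {S : Finset (Fin m)} {ρ : Fin m → ℝ} {p : Fin m → Fin m → ℝ} {q : Fin m → Fin n → ℝ}
    (hM : IsSingularExpansion (∑ i ∈ S, σ i • vecMulVec (x i) (y i) - B) ρ p q) :
    ∑ l, ρ l ≤ ∑ i ∈ S, σ i + nuclearNorm B := by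
  have hkept := abs_sum_dotProduct_sum_smul_vecMulVec_mulVec_le (t := S) (c := σ) hD.left hD.right
    hM.left hM.right univ
  have hB := abs_sum_dotProduct_mulVec_le_nuclearNorm B hM.left hM.right univ
  simp_rw [abs_of_nonneg (hD.nonneg _)] at hkept
  calc ∑ l, ρ l = ∑ l, p l ⬝ᵥ ((∑ i ∈ S, σ i • vecMulVec (x i) (y i)) *ᵥ q l) -
        ∑ l, p l ⬝ᵥ (B *ᵥ q l) := by
          rw [← sum_sub_distrib]
          exact sum_congr rfl fun l _ => by
            rw [← hM.dotProduct_mulVec_self l, sub_mulVec, dotProduct_sub]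
    _ ≤ ∑ i ∈ S, σ i + nuclearNorm B := by
      linarith [le_abs_self (∑ l, p l ⬝ᵥ ((∑ i ∈ S, σ i • vecMulVec (x i) (y i)) *ᵥ q l)),
        neg_abs_le (∑ l, p l ⬝ᵥ (B *ᵥ q l))]

theorem sum_sub_opNorm_le_nuclearNorm (hD : IsSingularExpansion D σ x y) (S : Finset (Fin m)) :
    ∑ i ∈ S, (σ i - opNorm (D - B)) ≤ nuclearNorm B := by
  have hterm : ∀ i, σ i - opNorm (D - B) ≤ x i ⬝ᵥ (B *ᵥ y i) := fun i => by
    have := abs_dotProduct_mulVec_le_opNorm (D - B) (hD.left.2 i) (hD.right.2 i)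
    rw [sub_mulVec, dotProduct_sub, hD.dotProduct_mulVec_self] at this
    linarith [le_abs_self (σ i - x i ⬝ᵥ (B *ᵥ y i))]
  calc _ ≤ ∑ i ∈ S, x i ⬝ᵥ (B *ᵥ y i) := sum_le_sum fun i _ => hterm i
    _ ≤ _ := (le_abs_self _).trans (abs_sum_dotProduct_mulVec_le_nuclearNorm B hD.left hD.right S)

end Thresholding

theorem mul_sum_le_of_sum_sub_le {ι : Type*} (S : Finset ι) {σ : ι → ℝ} {δ ε N : ℝ}
    (hδ : 0 < δ) (hε : 0 ≤ ε) (hS : ∀ i ∈ S, (1 + δ) * ε < σ i)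
    (hN : ∑ i ∈ S, (σ i - ε) ≤ N) : ε * ∑ i ∈ S, σ i ≤ (1 + 1 / δ) * (ε * N) := by
  have hcard : #S * (δ * ε) ≤ ∑ i ∈ S, (σ i - ε) := by
    rw [← nsmul_eq_mul]
    exact card_nsmul_le_sum S (fun i => σ i - ε) (δ * ε) fun i hi => by linarith [hS i hi]
  have hsum : ∑ i ∈ S, σ i = ∑ i ∈ S, (σ i - ε) + #S * ε := by simp [sum_sub_distrib]
  have hsq : #S * ε * ε ≤ ε * N / δ := by
    rw [le_div_iff₀ hδ]
    nlinarith [mul_le_mul_of_nonneg_left (hcard.trans hN) hε]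
  rw [hsum, one_add_mul, one_div_mul_eq_div]
  nlinarith [mul_le_mul_of_nonneg_left hN hε]

theorem two_add_mul_two_add_inv_le_sq {δ : ℝ} (hδ : 0 < δ) :
    (2 + δ) * (2 + 1 / δ) ≤ ((4 + 2 * δ) * √(2 / δ) + √(2 + δ)) ^ 2 := by
  have hlead : ((4 + 2 * δ) * √(2 / δ)) ^ 2 = (2 + δ) * (8 * (2 + δ)) / δ := by
    rw [mul_pow, Real.sq_sqrt (by positivity)]
    ring
  calc (2 + δ) * (2 + 1 / δ) = (2 + δ) * (2 * δ + 1) / δ := by field_simp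
    _ ≤ ((4 + 2 * δ) * √(2 / δ)) ^ 2 := by
      rw [hlead]
      gcongr
      linarith
    _ ≤ _ := pow_le_pow_left₀ (by positivity) (le_add_of_nonneg_right (Real.sqrt_nonneg _)) 2

theorem svt_lemma_general (m n : ℕ) (B D : Matrix (Fin m) (Fin n) ℝ)
    (σ : Fin m → ℝ) (x : Fin m → Fin m → ℝ) (y : Fin m → Fin n → ℝ)
    (hσpos : ∀ i, 0 ≤ σ i)
    (hx : ∀ i j, ∑ k, x i k * x j k = if i = j then 1 else 0)
    (hy : ∀ i j, ∑ k, y i k * y j k = if i = j then 1 else 0)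
    (hD : D = ∑ i : Fin m, σ i • Matrix.vecMulVec (x i) (y i))
    (δ : ℝ) (hδ : 0 < δ) :
    Real.sqrt (frobSq
        ((∑ i ∈ Finset.univ.filter (fun i => (1 + δ) * opNorm (D - B) < σ i),
          σ i • Matrix.vecMulVec (x i) (y i)) - B)) ≤
      ((4 + 2 * δ) * Real.sqrt (2 / δ) + Real.sqrt (2 + δ)) *
        Real.sqrt (opNorm (D - B) * nuclearNorm B) := by
  set ε := opNorm (D - B)
  set S := univ.filter fun i => (1 + δ) * ε < σ i
  set K := (4 + 2 * δ) * √(2 / δ) + √(2 + δ)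
  have hε : 0 ≤ ε := opNorm_nonneg _
  have hεN : 0 ≤ ε * nuclearNorm B := mul_nonneg hε (nuclearNorm_nonneg B)
  have hDexp : IsSingularExpansion D σ x y :=
    ⟨hD, hσpos, Suborthonormal.of_dotProduct_eq_ite hx, Suborthonormal.of_dotProduct_eq_ite hy,
      fun j _ => ⟨(hx j j).trans (if_pos rfl), (hy j j).trans (if_pos rfl)⟩⟩
  obtain ⟨ρ, p, q, hM, -, -⟩ :=
    exists_isSingularExpansion (∑ i ∈ S, σ i • vecMulVec (x i) (y i) - B)
  have hρ : ∀ l, ρ l ≤ (2 + δ) * ε := fun l => by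
    have := singularValue_threshold_sub_le hDexp hM (c := (1 + δ) * ε) (by positivity)
      (fun i hi => by simpa [S] using hi) l
    linarith
  have hkept := mul_sum_le_of_sum_sub_le S hδ hε (fun i hi => (mem_filter.1 hi).2)
    (sum_sub_opNorm_le_nuclearNorm hDexp S)
  have hfrob : frobSq (∑ i ∈ S, σ i • vecMulVec (x i) (y i) - B) ≤ K ^ 2 * (ε * nuclearNorm B) := by
    rw [hM.frobSq_eq]
    calc ∑ l, ρ l ^ 2 ≤ ∑ l, (2 + δ) * ε * ρ l := sum_le_sum fun l _ => by
          rw [sq]; exact mul_le_mul_of_nonneg_right (hρ l) (hM.nonneg l)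
      _ ≤ (2 + δ) * (ε * ∑ i ∈ S, σ i + ε * nuclearNorm B) := by
          rw [← mul_sum, mul_assoc, ← mul_add]
          gcongr
          exact sum_singularValues_threshold_sub_le hDexp hM
      _ ≤ K ^ 2 * (ε * nuclearNorm B) := by nlinarith [two_add_mul_two_add_inv_le_sq hδ]
  calc √(frobSq _) ≤ √(K ^ 2 * (ε * nuclearNorm B)) := Real.sqrt_le_sqrt hfrob
    _ = K * √(ε * nuclearNorm B) := by
      rw [Real.sqrt_mul (sq_nonneg _), Real.sqrt_sq (by positivity)]

/-- Chatterjee's singular value thresholding lemma.  Let `B, D` be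
`m × n` real matrices (`m ≤ n`) and let `D = Σ_i σᵢ xᵢ yᵢᵀ` be a singular value
decomposition of `D` (`σ₁ ≥ … ≥ σ_m ≥ 0`, `xᵢ`, `yᵢ` orthonormal).  Fix `δ > 0` and set
`B̂ = Σ_{i : σᵢ > (1+δ)‖D − B‖} σᵢ xᵢ yᵢᵀ`.  Then
`‖B̂ − B‖_F ≤ K(δ)(‖D − B‖ ‖B‖_*)^{1/2}` with `K(δ) = (4+2δ)√(2/δ) + √(2+δ)`. -/
theorem svt_lemma (m n : ℕ) (hmn : m ≤ n) (B D : Matrix (Fin m) (Fin n) ℝ)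
    (σ : Fin m → ℝ) (x : Fin m → Fin m → ℝ) (y : Fin m → Fin n → ℝ)
    (hσdesc : ∀ i j : Fin m, i ≤ j → σ j ≤ σ i) (hσpos : ∀ i, 0 ≤ σ i)
    (hx : ∀ i j, ∑ k, x i k * x j k = if i = j then 1 else 0)
    (hy : ∀ i j, ∑ k, y i k * y j k = if i = j then 1 else 0)
    (hD : D = ∑ i : Fin m, σ i • Matrix.vecMulVec (x i) (y i))
    (δ : ℝ) (hδ : 0 < δ) :
    Real.sqrt (frobSq
        ((∑ i ∈ Finset.univ.filter (fun i => (1 + δ) * opNorm (D - B) < σ i),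
          σ i • Matrix.vecMulVec (x i) (y i)) - B)) ≤
      ((4 + 2 * δ) * Real.sqrt (2 / δ) + Real.sqrt (2 + δ)) *
        Real.sqrt (opNorm (D - B) * nuclearNorm B) :=
  svt_lemma_general m n B D σ x y hσpos hx hy hD δ hδ
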